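/- arXiv:1802.08898 — 5 statements merged into one kernel-verified Lean document; each statement's English description precedes it below -/
import Mathlib

section
/- Under the hypotheses of the previous setting (u a unit vector, u·∇U(x) bounded between min{m u·x, M u·x} − b and max{m u·x, M u·x} + b for all x, Hamiltonian dynamics q' = p, p' = −∇U(q)), if 0 ≤ T ≤ 1/(6√M), then for every t ∈ [0,T]: |u·q_t| ≥ (3/4)|u·q₀| − (1/(6√M))((3/2)|u·p₀| + (3/2)b/√M). -/
set_option maxHeartbeats 1000000

open Real
open scoped InnerProductSpace

/-- lower bound on the component of the position in direction `u`
over a short time interval, under the two-sided Gaussian tail bound. -/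
theorem hmc_projected_position_lower_bound {d : ℕ}
    (U : EuclideanSpace ℝ (Fin d) → ℝ)
    (gU : EuclideanSpace ℝ (Fin d) → EuclideanSpace ℝ (Fin d))
    (hU : ∀ x, HasGradientAt U (gU x) x)
    (u : EuclideanSpace ℝ (Fin d)) (hu : ‖u‖ = 1)
    (m M b : ℝ) (hm : 0 < m) (hmM : m ≤ M) (hb : 0 ≤ b)
    (htail : ∀ x, min (m * ⟪u, x⟫_ℝ) (M * ⟪u, x⟫_ℝ) - b ≤ ⟪u, gU x⟫_ℝ ∧
      ⟪u, gU x⟫_ℝ ≤ max (m * ⟪u, x⟫_ℝ) (M * ⟪u, x⟫_ℝ) + b)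
    (q p : ℝ → EuclideanSpace ℝ (Fin d))
    (hq : ∀ t, HasDerivAt q (p t) t)
    (hp : ∀ t, HasDerivAt p (-gU (q t)) t)
    (T : ℝ) (hT0 : 0 ≤ T) (hT : T ≤ 1 / (6 * Real.sqrt M)) :
    ∀ t ∈ Set.Icc (0:ℝ) T,
      (3/4) * |⟪u, q 0⟫_ℝ| - (1 / (6 * Real.sqrt M)) *
          ((3/2) * |⟪u, p 0⟫_ℝ| + (3/2) * b / Real.sqrt M)
        ≤ |⟪u, q t⟫_ℝ| := by
  have hM0 : (0:ℝ) < M := lt_of_lt_of_le hm hmM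
  set r := Real.sqrt M with hrdef
  have hr : 0 < r := Real.sqrt_pos.mpr hM0
  have hMr : M = r * r := (Real.mul_self_sqrt hM0.le).symm
  set φ : ℝ → ℝ := fun s => ⟪u, q s⟫_ℝ with hφdef
  set ψ : ℝ → ℝ := fun s => ⟪u, p s⟫_ℝ with hψdef
  have hφ' : ∀ s, HasDerivAt φ (ψ s) s := by
    intro s
    have := (hasDerivAt_const s u).inner ℝ (hq s)
    simpa using this
  have hψ' : ∀ s, HasDerivAt ψ (-⟪u, gU (q s)⟫_ℝ) s := by
    intro s
    have := (hasDerivAt_const s u).inner ℝ (hp s)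
    simpa [inner_neg_right] using this
  have hgrad : ∀ s : ℝ, |⟪u, gU (q s)⟫_ℝ| ≤ M * |φ s| + b := by
    intro s
    obtain ⟨h1, h2⟩ := htail (q s)
    have habs1 : φ s ≤ |φ s| := le_abs_self _
    have habs2 : -|φ s| ≤ φ s := neg_abs_le _
    have habs0 : 0 ≤ |φ s| := abs_nonneg _
    rw [abs_le]
    constructor
    · have hmin : -(M * |φ s|) ≤ min (m * φ s) (M * φ s) := by
        apply le_min <;>
          nlinarith [mul_le_mul_of_nonneg_left habs2 hm.le,
            mul_le_mul_of_nonneg_left habs2 hM0.le,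
            mul_le_mul_of_nonneg_right hmM habs0]
      have : min (m * ⟪u, q s⟫_ℝ) (M * ⟪u, q s⟫_ℝ) = min (m * φ s) (M * φ s) := rfl
      rw [this] at h1
      linarith
    · have hmax : max (m * φ s) (M * φ s) ≤ M * |φ s| := by
        apply max_le <;>
          nlinarith [mul_le_mul_of_nonneg_left habs1 hm.le,
            mul_le_mul_of_nonneg_left habs1 hM0.le,
            mul_le_mul_of_nonneg_right hmM habs0]
      have : max (m * ⟪u, q s⟫_ℝ) (M * ⟪u, q s⟫_ℝ) = max (m * φ s) (M * φ s) := rfl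
      rw [this] at h2
      linarith
  have cφ : Continuous φ := continuous_iff_continuousAt.mpr fun s => (hφ' s).continuousAt
  have cψ : Continuous ψ := continuous_iff_continuousAt.mpr fun s => (hψ' s).continuousAt
  have hIcc : (Set.Icc (0:ℝ) T).Nonempty := Set.nonempty_Icc.mpr hT0
  obtain ⟨a, haI, ha⟩ := isCompact_Icc.exists_isMaxOn hIcc (cφ.abs.continuousOn)
  obtain ⟨c, hcI, hc⟩ := isCompact_Icc.exists_isMaxOn hIcc (cψ.abs.continuousOn)
  set A := |φ a| with hAdef
  set B := |ψ c| with hBdef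
  have hA0 : 0 ≤ A := abs_nonneg _
  have hB0 : 0 ≤ B := abs_nonneg _
  have hAle : ∀ s ∈ Set.Icc (0:ℝ) T, |φ s| ≤ A := fun s hs => isMaxOn_iff.mp ha s hs
  have hBle : ∀ s ∈ Set.Icc (0:ℝ) T, |ψ s| ≤ B := fun s hs => isMaxOn_iff.mp hc s hs
  have hconv : Convex ℝ (Set.Icc (0:ℝ) T) := convex_Icc _ _
  have h0mem : (0:ℝ) ∈ Set.Icc (0:ℝ) T := Set.left_mem_Icc.mpr hT0
  have hψbd : ∀ s ∈ Set.Icc (0:ℝ) T, |ψ s - ψ 0| ≤ (M * A + b) * s := by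
    intro s hs
    have := Convex.norm_image_sub_le_of_norm_hasDerivWithin_le
      (f := ψ) (f' := fun x => -⟪u, gU (q x)⟫_ℝ) (s := Set.Icc (0:ℝ) T)
      (fun x _ => (hψ' x).hasDerivWithinAt)
      (fun x hx => by
        rw [Real.norm_eq_abs, abs_neg]
        calc |⟪u, gU (q x)⟫_ℝ| ≤ M * |φ x| + b := hgrad x
          _ ≤ M * A + b := by nlinarith [hAle x hx])
      hconv h0mem hs
    simpa [Real.norm_eq_abs, abs_of_nonneg hs.1] using this
  have hφbd : ∀ s ∈ Set.Icc (0:ℝ) T, |φ s - φ 0| ≤ B * s := by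
    intro s hs
    have := Convex.norm_image_sub_le_of_norm_hasDerivWithin_le
      (f := φ) (f' := ψ) (s := Set.Icc (0:ℝ) T)
      (fun x _ => (hφ' x).hasDerivWithinAt)
      (fun x hx => by rw [Real.norm_eq_abs]; exact hBle x hx)
      hconv h0mem hs
    simpa [Real.norm_eq_abs, abs_of_nonneg hs.1] using this
  have hMAb : 0 ≤ M * A + b := by positivity
  have hBbound : B ≤ |ψ 0| + (M * A + b) * T := by
    have h1 := hψbd c hcI
    have h2 := abs_sub_abs_le_abs_sub (ψ c) (ψ 0)
    nlinarith [mul_le_mul_of_nonneg_left hcI.2 hMAb]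
  have hAbound : A ≤ |φ 0| + B * T := by
    have h1 := hφbd a haI
    have h2 := abs_sub_abs_le_abs_sub (φ a) (φ 0)
    nlinarith [mul_le_mul_of_nonneg_left haI.2 hB0]
  have hTr : T * r ≤ 1/6 := by
    have h6 : (0:ℝ) < 6 * r := by positivity
    have := (le_div_iff₀ h6).mp hT
    linarith
  have hX0 : 0 ≤ |φ 0| := abs_nonneg _
  have hY0 : 0 ≤ |ψ 0| := abs_nonneg _
  have hTr2 : (T * r) * (T * r) ≤ 1/36 := by
    nlinarith [mul_nonneg hT0 hr.le]
  rw [hMr] at hBbound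
  have hB2 : 35 * B ≤ 36 * (|ψ 0| + T * (r*r) * |φ 0| + T * b) := by
    nlinarith [mul_le_mul_of_nonneg_left hAbound (by positivity : (0:ℝ) ≤ T * (r*r)),
      mul_le_mul_of_nonneg_right hTr2 hB0]
  have hkey : B * T ≤ 1/4 * |φ 0| + (1 / (6 * r)) * ((3/2) * |ψ 0| + (3/2) * b / r) := by
    rw [show (1:ℝ)/4 * |φ 0| + (1 / (6 * r)) * ((3/2) * |ψ 0| + (3/2) * b / r)
        = (r^2 * |φ 0| + r * |ψ 0| + b) / (4 * r^2) by field_simp; ring]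
    rw [le_div_iff₀ (by positivity)]
    nlinarith [mul_le_mul_of_nonneg_left hB2 (by positivity : (0:ℝ) ≤ r * r * T),
      mul_le_mul_of_nonneg_right hTr (mul_nonneg hr.le hY0),
      mul_le_mul_of_nonneg_right hTr2 (by positivity : (0:ℝ) ≤ r * r * |φ 0|),
      mul_le_mul_of_nonneg_right hTr2 hb,
      mul_nonneg hT0 hr.le]
  intro t ht
  have h1 := hφbd t ht
  have h2 := abs_sub_abs_le_abs_sub (φ 0) (φ t)
  rw [abs_sub_comm] at h2
  have h3 : |φ 0| - B * T ≤ |φ t| := by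
    nlinarith [mul_le_mul_of_nonneg_left ht.2 hB0]
  have e1 : |⟪u, q 0⟫_ℝ| = |φ 0| := rfl
  have e2 : |⟪u, p 0⟫_ℝ| = |ψ 0| := rfl
  have e3 : |⟪u, q t⟫_ℝ| = |φ t| := rfl
  rw [e1, e2, e3]
  linarith
end

section
/- Under the same hypotheses (Gaussian tail bound in direction u, Hamiltonian dynamics), if 0 ≤ T ≤ 1/(6√M), then for every t ∈ [0,T]: |u·p_t| ≤ (3/2)√M |u·q₀| + (3/2)|u·p₀| + (3/2) b/√M. -/
open Real
open scoped InnerProductSpace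

/-! Project the dynamics onto `u`: `x = ⟪u, q⟫` and `y = ⟪u, p⟫` satisfy `x' = y` and, by the tail
bound, `|y'| ≤ M |x| + b`. So `(√M x, y)` grows in sup norm at rate at most `√M` (plus `b`), and
Grönwall's inequality bounds it by `δ e^{√M t} + (b/√M)(e^{√M t} - 1)`, with `δ` its initial
sup norm; on `√M t ≤ 1/6` the exponential is below `3/2`. -/

lemma abs_le_mul_abs_add_of_min_sub_le_of_le_max_add {m M b x y : ℝ} (hm : 0 ≤ m) (hmM : m ≤ M)
    (hlow : min (m * x) (M * x) - b ≤ y) (hup : y ≤ max (m * x) (M * x) + b) :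
    |y| ≤ M * |x| + b := by
  have hmin : -(M * |x|) ≤ min (m * x) (M * x) :=
    le_min (by nlinarith [neg_abs_le x, abs_nonneg x]) (by nlinarith [neg_abs_le x, abs_nonneg x])
  have hmax : max (m * x) (M * x) ≤ M * |x| :=
    max_le (by nlinarith [le_abs_self x, abs_nonneg x]) (by nlinarith [le_abs_self x, abs_nonneg x])
  exact abs_le.mpr ⟨by linarith, by linarith⟩

lemma max_abs_le_gronwallBound_of_hasDerivAt_of_abs_deriv_le {x y y' : ℝ → ℝ} {K ε : ℝ}
    (hK : 0 ≤ K) (hε : 0 ≤ ε) (hx : ∀ t, HasDerivAt x (y t) t) (hy : ∀ t, HasDerivAt y (y' t) t)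
    (hy' : ∀ t, |y' t| ≤ K ^ 2 * |x t| + ε) {t : ℝ} (ht : 0 ≤ t) :
    max (K * |x t|) |y t| ≤ gronwallBound (max (K * |x 0|) |y 0|) K ε t := by
  have hnorm : ∀ a c : ℝ, ‖((K * a, c) : ℝ × ℝ)‖ = max (K * |a|) |c| := fun a c => by
    simp [Prod.norm_def, abs_of_nonneg hK]
  have hF : ∀ τ, HasDerivAt (fun τ => (K * x τ, y τ)) (K * y τ, y' τ) τ :=
    fun τ => ((hx τ).const_mul K).prodMk (hy τ)
  have bound := norm_le_gronwallBound_of_norm_deriv_right_le (a := 0) (b := t)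
    (fun τ _ => (hF τ).continuousAt.continuousWithinAt) (fun τ _ => (hF τ).hasDerivWithinAt)
    (hnorm (x 0) (y 0)).le (fun τ _ => by
      rw [hnorm, hnorm]
      have hyK : K * |y τ| ≤ K * max (K * |x τ|) |y τ| :=
        mul_le_mul_of_nonneg_left (le_max_right _ _) hK
      have hy'K : |y' τ| ≤ K * max (K * |x τ|) |y τ| + ε := by
        have := mul_le_mul_of_nonneg_left (le_max_left (K * |x τ|) |y τ|) hK
        linarith [hy' τ]
      exact max_le (by linarith) hy'K) t ⟨ht, le_rfl⟩
  simpa [hnorm] using bound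

lemma gronwallBound_le_of_mul_le_one_third {δ K ε t : ℝ} (hδ : 0 ≤ δ) (hε : 0 ≤ ε) (hK : 0 < K)
    (ht : 0 ≤ t) (hKt : K * t ≤ 1 / 3) :
    gronwallBound δ K ε t ≤ 3 / 2 * δ + ε / K / 2 := by
  have hexp : exp (K * t) ≤ 3 / 2 :=
    (exp_bound_div_one_sub_of_interval (by positivity) (by linarith)).trans
      (by rw [div_le_iff₀ (by linarith)]; linarith)
  have hεK : 0 ≤ ε / K := by positivity
  rw [gronwallBound_of_K_ne_0 hK.ne']
  nlinarith

theorem hmc_projected_momentum_upper_bound_general {d : ℕ}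
    (gU : EuclideanSpace ℝ (Fin d) → EuclideanSpace ℝ (Fin d))
    (u : EuclideanSpace ℝ (Fin d))
    (m M b : ℝ) (hm : 0 < m) (hmM : m ≤ M) (hb : 0 ≤ b)
    (htail : ∀ x, min (m * ⟪u, x⟫_ℝ) (M * ⟪u, x⟫_ℝ) - b ≤ ⟪u, gU x⟫_ℝ ∧
      ⟪u, gU x⟫_ℝ ≤ max (m * ⟪u, x⟫_ℝ) (M * ⟪u, x⟫_ℝ) + b)
    (q p : ℝ → EuclideanSpace ℝ (Fin d))
    (hq : ∀ t, HasDerivAt q (p t) t)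
    (hp : ∀ t, HasDerivAt p (-gU (q t)) t)
    (T : ℝ) (hT : T ≤ 1 / (6 * Real.sqrt M)) :
    ∀ t ∈ Set.Icc (0:ℝ) T,
      |⟪u, p t⟫_ℝ| ≤ (3/2) * Real.sqrt M * |⟪u, q 0⟫_ℝ|
        + (3/2) * |⟪u, p 0⟫_ℝ| + (3/2) * b / Real.sqrt M := by
  rintro t ⟨ht0, htT⟩
  have hM : 0 < M := hm.trans_le hmM
  have hs : 0 < √M := sqrt_pos.mpr hM
  have hx : ∀ τ, HasDerivAt (fun τ => ⟪u, q τ⟫_ℝ) ⟪u, p τ⟫_ℝ τ := fun τ =>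
    (innerSL ℝ u).hasFDerivAt.comp_hasDerivAt τ (hq τ)
  have hy : ∀ τ, HasDerivAt (fun τ => ⟪u, p τ⟫_ℝ) ⟪u, -gU (q τ)⟫_ℝ τ := fun τ =>
    (innerSL ℝ u).hasFDerivAt.comp_hasDerivAt τ (hp τ)
  have hy' : ∀ τ, |⟪u, -gU (q τ)⟫_ℝ| ≤ √M ^ 2 * |⟪u, q τ⟫_ℝ| + b := fun τ => by
    rw [inner_neg_right, abs_neg, sq_sqrt hM.le]
    exact abs_le_mul_abs_add_of_min_sub_le_of_le_max_add hm.le hmM (htail _).1 (htail _).2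
  have hst : √M * t ≤ 1 / 3 := by
    have := (le_div_iff₀ (by positivity)).mp hT
    nlinarith
  have hmax := max_abs_le_gronwallBound_of_hasDerivAt_of_abs_deriv_le hs.le hb hx hy hy' ht0
  have hgron := gronwallBound_le_of_mul_le_one_third
    (δ := max (√M * |⟪u, q 0⟫_ℝ|) |⟪u, p 0⟫_ℝ|) (by positivity) hb hs ht0 hst
  have hinit : max (√M * |⟪u, q 0⟫_ℝ|) |⟪u, p 0⟫_ℝ| ≤ √M * |⟪u, q 0⟫_ℝ| + |⟪u, p 0⟫_ℝ| :=
    max_le (le_add_of_nonneg_right (abs_nonneg _)) (le_add_of_nonneg_left (by positivity))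
  have hbs : 0 ≤ b / √M := by positivity
  calc |⟪u, p t⟫_ℝ| ≤ 3 / 2 * max (√M * |⟪u, q 0⟫_ℝ|) |⟪u, p 0⟫_ℝ| + b / √M / 2 := by
        linarith [le_max_right (√M * |⟪u, q t⟫_ℝ|) |⟪u, p t⟫_ℝ|]
    _ ≤ 3 / 2 * √M * |⟪u, q 0⟫_ℝ| + 3 / 2 * |⟪u, p 0⟫_ℝ| + 3 / 2 * b / √M := by
        rw [mul_div_assoc (3 / 2)]; linarith

/-- upper bound on the component of the momentum in direction `u`
over a short time interval, under the two-sided Gaussian tail bound. -/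
theorem hmc_projected_momentum_upper_bound {d : ℕ}
    (U : EuclideanSpace ℝ (Fin d) → ℝ)
    (gU : EuclideanSpace ℝ (Fin d) → EuclideanSpace ℝ (Fin d))
    (hU : ∀ x, HasGradientAt U (gU x) x)
    (u : EuclideanSpace ℝ (Fin d)) (hu : ‖u‖ = 1)
    (m M b : ℝ) (hm : 0 < m) (hmM : m ≤ M) (hb : 0 ≤ b)
    (htail : ∀ x, min (m * ⟪u, x⟫_ℝ) (M * ⟪u, x⟫_ℝ) - b ≤ ⟪u, gU x⟫_ℝ ∧
      ⟪u, gU x⟫_ℝ ≤ max (m * ⟪u, x⟫_ℝ) (M * ⟪u, x⟫_ℝ) + b)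
    (q p : ℝ → EuclideanSpace ℝ (Fin d))
    (hq : ∀ t, HasDerivAt q (p t) t)
    (hp : ∀ t, HasDerivAt p (-gU (q t)) t)
    (T : ℝ) (hT0 : 0 ≤ T) (hT : T ≤ 1 / (6 * Real.sqrt M)) :
    ∀ t ∈ Set.Icc (0:ℝ) T,
      |⟪u, p t⟫_ℝ| ≤ (3/2) * Real.sqrt M * |⟪u, q 0⟫_ℝ|
        + (3/2) * |⟪u, p 0⟫_ℝ| + (3/2) * b / Real.sqrt M :=
  hmc_projected_momentum_upper_bound_general gU u m M b hm hmM hb htail q p hq hp T hT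
end

section
/- Let (X_i) be a real-valued stochastic process and λ > 0, α ∈ (0,1), β > 0 such that E[e^{λ X_i} | X_{i−1}] ≤ (1−α)e^{λ X_{i−1}} + β for all i, and E[e^{λ X₀}] ≤ β/α. Then for any integers 0 ≤ s ≤ I and all ξ > 0, P[ sup_{I−s ≤ h ≤ I} X_h > ξ ] ≤ (2β(s+1)/α) e^{−λξ}. -/
open MeasureTheory Real

/-- an exponential Lyapunov drift condition for a real-valued process
yields exponential tail bounds for the running supremum over a window of
`s+1` consecutive steps. -/
theorem exponential_lyapunov_sup_tail_bound {Ω : Type*}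
    [MeasurableSpace Ω] (μ : Measure Ω) [IsProbabilityMeasure μ]
    (X : ℕ → Ω → ℝ) (hX : ∀ i, Measurable (X i))
    (lam α β : ℝ) (hlam : 0 < lam) (hα : α ∈ Set.Ioo (0:ℝ) 1) (hβ : 0 < β)
    (hint : ∀ i, Integrable (fun ω => Real.exp (lam * X i ω)) μ)
    (hdrift : ∀ i : ℕ, 1 ≤ i →
      μ[fun ω => Real.exp (lam * X i ω)|MeasurableSpace.comap (X (i-1)) inferInstance]
        ≤ᵐ[μ] fun ω => (1 - α) * Real.exp (lam * X (i-1) ω) + β)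
    (h0 : ∫ ω, Real.exp (lam * X 0 ω) ∂μ ≤ β / α) :
    ∀ I s : ℕ, s ≤ I → ∀ ξ : ℝ, 0 < ξ →
      (μ {ω | ∃ h ∈ Finset.Icc (I - s) I, ξ < X h ω}).toReal
        ≤ (2 * β * (s + 1) / α) * Real.exp (-(lam * ξ)) := by
  obtain ⟨hα0, hα1⟩ := hα
  have mom : ∀ i, ∫ ω, Real.exp (lam * X i ω) ∂μ ≤ β / α := by
    intro i
    induction i with
    | zero => exact h0
    | succ n ih =>
      have hm : MeasurableSpace.comap (X n) inferInstance ≤ (inferInstance : MeasurableSpace Ω) :=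
        (hX n).comap_le
      have hd := hdrift (n+1) (Nat.le_add_left 1 n)
      simp only [Nat.add_sub_cancel] at hd
      calc ∫ ω, Real.exp (lam * X (n+1) ω) ∂μ
          = ∫ ω, (μ[fun ω => Real.exp (lam * X (n+1) ω)|MeasurableSpace.comap (X n) inferInstance]) ω ∂μ :=
            (integral_condExp hm).symm
        _ ≤ ∫ ω, ((1 - α) * Real.exp (lam * X n ω) + β) ∂μ :=
            integral_mono_ae integrable_condExp
              (((hint n).const_mul _).add (integrable_const β)) hd
        _ = (1 - α) * ∫ ω, Real.exp (lam * X n ω) ∂μ + β := by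
            rw [integral_add (((hint n).const_mul _)) (integrable_const β),
              integral_const_mul, integral_const]
            simp
        _ ≤ (1 - α) * (β / α) + β := by
            have := mul_le_mul_of_nonneg_left ih (by linarith : (0:ℝ) ≤ 1 - α)
            linarith
        _ = β / α := by field_simp; ring
  intro I s hsI ξ hξ
  -- Markov for each h
  have markov : ∀ h : ℕ, (μ {ω | ξ < X h ω}).toReal ≤ (β / α) * Real.exp (-(lam * ξ)) := by
    intro h
    have hsub : {ω | ξ < X h ω} ⊆ {ω | Real.exp (lam * ξ) ≤ Real.exp (lam * X h ω)} := by
      intro ω hω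
      exact Real.exp_le_exp.2 (mul_le_mul_of_nonneg_left (le_of_lt hω) hlam.le)
    have hmono : (μ {ω | ξ < X h ω}).toReal
        ≤ (μ {ω | Real.exp (lam * ξ) ≤ Real.exp (lam * X h ω)}).toReal := by
      exact ENNReal.toReal_mono (measure_ne_top μ _) (measure_mono hsub)
    have hmark := mul_meas_ge_le_integral_of_nonneg
      (ae_of_all μ fun ω => (Real.exp_pos _).le) (hint h) (Real.exp (lam * ξ))
    have hpos : 0 < Real.exp (lam * ξ) := Real.exp_pos _
    have : (μ {ω | Real.exp (lam * ξ) ≤ Real.exp (lam * X h ω)}).toReal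
        ≤ (β / α) * Real.exp (-(lam * ξ)) := by
      rw [Real.exp_neg, ← div_eq_mul_inv]
      calc (μ {ω | Real.exp (lam * ξ) ≤ Real.exp (lam * X h ω)}).toReal
          ≤ (∫ ω, Real.exp (lam * X h ω) ∂μ) / Real.exp (lam * ξ) :=
            (le_div_iff₀' hpos).2 hmark
        _ ≤ (β / α) / Real.exp (lam * ξ) := by gcongr; exact mom h
    exact hmono.trans this
  -- union bound
  have hset : {ω | ∃ h ∈ Finset.Icc (I - s) I, ξ < X h ω}
      = ⋃ h ∈ Finset.Icc (I - s) I, {ω | ξ < X h ω} := by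
    ext ω; simp
  rw [hset]
  have hUB : (μ (⋃ h ∈ Finset.Icc (I - s) I, {ω | ξ < X h ω})).toReal
      ≤ ∑ h ∈ Finset.Icc (I - s) I, (μ {ω | ξ < X h ω}).toReal := by
    refine le_trans (ENNReal.toReal_mono ?_ (measure_biUnion_finset_le _ _)) ?_
    · exact (ENNReal.sum_lt_top.2 fun h _ => measure_lt_top μ _).ne
    · rw [ENNReal.toReal_sum (fun h _ => measure_ne_top μ _)]
  refine hUB.trans ?_
  have hcard : (Finset.Icc (I - s) I).card = s + 1 := by
    rw [Nat.card_Icc]; omega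
  calc ∑ h ∈ Finset.Icc (I - s) I, (μ {ω | ξ < X h ω}).toReal
      ≤ ∑ _h ∈ Finset.Icc (I - s) I, (β / α) * Real.exp (-(lam * ξ)) :=
        Finset.sum_le_sum fun h _ => markov h
    _ = (s + 1 : ℝ) * ((β / α) * Real.exp (-(lam * ξ))) := by
        rw [Finset.sum_const, hcard, nsmul_eq_mul]; push_cast; ring
    _ ≤ (2 * β * (s + 1) / α) * Real.exp (-(lam * ξ)) := by
        have h1 : (0:ℝ) < s + 1 := by positivity
        have key : (s + 1 : ℝ) * (β / α) ≤ 2 * β * (s + 1) / α := by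
          rw [mul_div_assoc']
          gcongr (?_) / α
          nlinarith
        nlinarith [Real.exp_pos (-(lam * ξ))]
end

section
/- Let U : ℝᵈ → ℝ be twice continuously differentiable with M-Lipschitz gradient, and let (q_t, p_t) solve Hamilton's equations q' = p, p' = −∇U(q) with initial data (q₀,p₀). Let p̄ = sup_{0≤t≤η} ‖p_t‖₂. Then the leapfrog position update q° = q₀ + η p₀ − (η²/2)∇U(q₀) satisfies ‖q° − q_η‖₂ ≤ (1/6) η³ p̄ M. -/
/-! The exact position satisfies `q η = q 0 + η p 0 - ∫₀^η ∫₀^t ∇U(q τ) dτ dt`, so the leapfrog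
error is the double integral of `∇U(q τ) - ∇U(q 0)`, whose norm is at most `M ‖q τ - q 0‖ ≤ M p̄ τ`.
Integrating `M p̄ τ` twice gives `M p̄ η³ / 6`; the integrals are replaced by two comparison
arguments against the polynomial bounds `M p̄ t² / 2` and `M p̄ t³ / 6`. -/

open Set

section Taylor

variable {E : Type*} [NormedAddCommGroup E] [NormedSpace ℝ E]

theorem norm_sub_sub_smul_le_of_norm_deriv_sub_le {v a : ℝ → E} {K η : ℝ}
    (hv : ∀ t ∈ Icc 0 η, HasDerivAt v (a t) t) (ha : ∀ t ∈ Ico 0 η, ‖a t - a 0‖ ≤ K * t) :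
    ∀ t ∈ Icc 0 η, ‖v t - v 0 - t • a 0‖ ≤ K * t ^ 2 / 2 := by
  have hderiv : ∀ t ∈ Icc 0 η,
      HasDerivAt (fun t => v t - v 0 - t • a 0) (a t - a 0) t := fun t ht => by
    simpa using ((hv t ht).sub_const (v 0)).fun_sub ((hasDerivAt_id t).smul_const (a 0))
  refine image_norm_le_of_norm_deriv_right_le_deriv_boundary
    (fun t ht => (hderiv t ht).continuousAt.continuousWithinAt)
    (fun t ht => (hderiv t (Ico_subset_Icc_self ht)).hasDerivWithinAt)
    (by simp) (fun t => (((hasDerivAt_pow 2 t).const_mul K).div_const 2).congr_deriv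
      (by norm_num; ring)) ha

theorem norm_sub_sub_smul_sub_smul_le_of_norm_deriv_deriv_sub_le {f v a : ℝ → E} {K η : ℝ}
    (hη : 0 ≤ η) (hf : ∀ t ∈ Icc 0 η, HasDerivAt f (v t) t)
    (hv : ∀ t ∈ Icc 0 η, HasDerivAt v (a t) t) (ha : ∀ t ∈ Ico 0 η, ‖a t - a 0‖ ≤ K * t) :
    ‖f η - f 0 - η • v 0 - (η ^ 2 / 2) • a 0‖ ≤ K * η ^ 3 / 6 := by
  have hderiv : ∀ t ∈ Icc 0 η, HasDerivAt (fun t => f t - f 0 - t • v 0 - (t ^ 2 / 2) • a 0)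
      (v t - v 0 - t • a 0) t := fun t ht => by
    convert (((hf t ht).sub_const (f 0)).fun_sub ((hasDerivAt_id t).smul_const (v 0))).fun_sub
      (((hasDerivAt_pow 2 t).div_const 2).smul_const (a 0)) using 1
    simp only [id]
    module
  refine image_norm_le_of_norm_deriv_right_le_deriv_boundary
    (B := fun t => K * t ^ 3 / 6) (B' := fun t => K * t ^ 2 / 2)
    (fun t ht => (hderiv t ht).continuousAt.continuousWithinAt)
    (fun t ht => (hderiv t (Ico_subset_Icc_self ht)).hasDerivWithinAt)
    (by simp) (fun t => (((hasDerivAt_pow 3 t).const_mul K).div_const 6).congr_deriv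
      (by norm_num; ring))
    (fun t ht => norm_sub_sub_smul_le_of_norm_deriv_sub_le hv ha t (Ico_subset_Icc_self ht))
    (right_mem_Icc.2 hη)

end Taylor

theorem leapfrog_position_local_error_general {d : ℕ}
    (gU : EuclideanSpace ℝ (Fin d) → EuclideanSpace ℝ (Fin d))
    (M : ℝ) (hM : 0 ≤ M)
    (hlip : ∀ x y, ‖gU x - gU y‖ ≤ M * ‖x - y‖)
    (q p : ℝ → EuclideanSpace ℝ (Fin d))
    (hq : ∀ t, HasDerivAt q (p t) t)
    (hp : ∀ t, HasDerivAt p (-gU (q t)) t)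
    (η : ℝ) (hη : 0 ≤ η)
    (pbar : ℝ) (hpbar : ∀ t ∈ Set.Icc (0:ℝ) η, ‖p t‖ ≤ pbar) :
    ‖(q 0 + η • p 0 - (η^2 / 2) • gU (q 0)) - q η‖ ≤ (1/6) * η^3 * pbar * M := by
  have hdisp : ∀ t ∈ Icc 0 η, ‖q t - q 0‖ ≤ pbar * t := fun t ht => by
    simpa using norm_image_sub_le_of_norm_deriv_le_segment'
      (fun t _ => (hq t).hasDerivWithinAt) (fun t ht => hpbar t (Ico_subset_Icc_self ht)) t ht
  have hforce : ∀ t ∈ Ico 0 η, ‖-gU (q t) - -gU (q 0)‖ ≤ M * pbar * t := fun t ht =>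
    calc ‖-gU (q t) - -gU (q 0)‖
        = ‖gU (q t) - gU (q 0)‖ := by rw [neg_sub_neg, norm_sub_rev]
      _ ≤ M * ‖q t - q 0‖ := hlip _ _
      _ ≤ M * (pbar * t) := by gcongr; exact hdisp t (Ico_subset_Icc_self ht)
      _ = M * pbar * t := by ring
  have hremainder := norm_sub_sub_smul_sub_smul_le_of_norm_deriv_deriv_sub_le hη
    (fun t _ => hq t) (fun t _ => hp t) hforce
  calc ‖(q 0 + η • p 0 - (η^2 / 2) • gU (q 0)) - q η‖
      = ‖q η - q 0 - η • p 0 - (η ^ 2 / 2) • -gU (q 0)‖ := by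
        rw [← norm_neg]; congr 1; module
    _ ≤ M * pbar * η ^ 3 / 6 := hremainder
    _ = 1/6 * η^3 * pbar * M := by ring

/-- local error bound for the leapfrog position update against the
exact Hamiltonian flow, for a potential with `M`-Lipschitz gradient. -/
theorem leapfrog_position_local_error {d : ℕ}
    (U : EuclideanSpace ℝ (Fin d) → ℝ)
    (gU : EuclideanSpace ℝ (Fin d) → EuclideanSpace ℝ (Fin d))
    (hU : ∀ x, HasGradientAt U (gU x) x)
    (M : ℝ) (hM : 0 ≤ M)
    (hlip : ∀ x y, ‖gU x - gU y‖ ≤ M * ‖x - y‖)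
    (q p : ℝ → EuclideanSpace ℝ (Fin d))
    (hq : ∀ t, HasDerivAt q (p t) t)
    (hp : ∀ t, HasDerivAt p (-gU (q t)) t)
    (η : ℝ) (hη : 0 ≤ η)
    (pbar : ℝ) (hpbar : ∀ t ∈ Set.Icc (0:ℝ) η, ‖p t‖ ≤ pbar) :
    ‖(q 0 + η • p 0 - (η^2 / 2) • gU (q 0)) - q η‖ ≤ (1/6) * η^3 * pbar * M :=
  leapfrog_position_local_error_general gU M hM hlip q p hq hp η hη pbar hpbar
end

section
/- Let U be m-strongly convex with M-Lipschitz gradient, and suppose a one-step numerical integrator satisfies, for every input (q,p), ‖q^◇_η(q,p) − q_η(q,p)‖₂ ≤ η³ε₁ and ‖p^◇_η(q,p) − p_η(q,p)‖₂ ≤ η³ε₂, where (q_t,p_t) is the exact Hamiltonian flow. Then for η ≤ T ≤ (1/6)√m/M with T/η ∈ ℕ, the composition of T/η steps of the integrator satisfies ‖q^◇◇_T(q,p) − q_T(q,p)‖₂ ≤ T η² (ε₁ + ε₂/√M) e and ‖p^◇◇_T(q,p) − p_T(q,p)‖₂ ≤ T η² (ε₁ + ε₂/√M) e √M. -/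
open Real
open scoped InnerProductSpace

/-!
Measure the error in position–momentum space by the weighted norm
`max ‖Δq‖ (‖Δp‖ / √M)`. In this norm the Hamiltonian vector field `(q, p) ↦ (p, -∇U q)` is
`√M`-Lipschitz, so by Grönwall two exact trajectories separate at most by the factor `e^{√M t}`.
Splitting the error after `k + 1` steps into the local error of the last step and the error after
`k` steps transported by the exact flow over time `η` gives `e_{k+1} ≤ L + e^{√M η} e_k` with
`L = η³ (ε₁ + ε₂ / √M)`, hence `e_n ≤ n L e^{√M n η} = T η² (ε₁ + ε₂ / √M) e^{√M T}`, and
`√M T ≤ 1` because `T ≤ √m / (6 M)` and `m ≤ M`.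
-/

theorem le_mul_mul_pow_of_le_add_mul {e : ℕ → ℝ} {L K : ℝ} (hL : 0 ≤ L) (hK : 1 ≤ K)
    (h0 : e 0 = 0) (hstep : ∀ k, e (k + 1) ≤ L + K * e k) (k : ℕ) :
    e k ≤ k * L * K ^ k := by
  induction k with
  | zero => simp [h0]
  | succ k ih =>
    have hLK : L ≤ L * K ^ (k + 1) := le_mul_of_one_le_right hL (one_le_pow₀ hK)
    calc e (k + 1) ≤ L + K * (k * L * K ^ k) := by
          grw [hstep k, ih]
      _ = L + k * L * K ^ (k + 1) := by ring
      _ ≤ ((k + 1 : ℕ) : ℝ) * L * K ^ (k + 1) := by push_cast; linarith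

section PhaseSpace

variable {E : Type*} [NormedAddCommGroup E] [NormedSpace ℝ E]

variable (E) in
noncomputable def momentumScale (ω : ℝ) : E × E →L[ℝ] E × E :=
  (ContinuousLinearMap.id ℝ E).prodMap (ω⁻¹ • ContinuousLinearMap.id ℝ E)

theorem norm_momentumScale {ω : ℝ} (hω : 0 ≤ ω) (z : E × E) :
    ‖momentumScale E ω z‖ = max ‖z.1‖ (‖z.2‖ / ω) := by
  simp [momentumScale, Prod.norm_def, norm_smul, abs_of_nonneg hω, inv_mul_eq_div]

theorem norm_momentumScale_le_add {ω A B : ℝ} (hω : 0 < ω) {z : E × E}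
    (h₁ : ‖z.1‖ ≤ A) (h₂ : ‖z.2‖ ≤ B) :
    ‖momentumScale E ω z‖ ≤ A + B / ω := by
  have hB : 0 ≤ B / ω := div_nonneg ((norm_nonneg _).trans h₂) hω.le
  rw [norm_momentumScale hω.le, max_le_iff]
  exact ⟨by linarith, by linarith [div_le_div_of_nonneg_right h₂ hω.le, (norm_nonneg _).trans h₁]⟩

theorem norm_momentumScale_sub_le_mul_exp {g : E → E} {M ω : ℝ} (hω : 0 < ω) (hMω : M ≤ ω ^ 2)
    (hlip : ∀ x y, ‖g x - g y‖ ≤ M * ‖x - y‖) {x v y w : ℝ → E}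
    (hx : ∀ t, HasDerivAt x (v t) t) (hv : ∀ t, HasDerivAt v (-g (x t)) t)
    (hy : ∀ t, HasDerivAt y (w t) t) (hw : ∀ t, HasDerivAt w (-g (y t)) t) {t : ℝ} (ht : 0 ≤ t) :
    ‖momentumScale E ω ((x t, v t) - (y t, w t))‖ ≤
      ‖momentumScale E ω ((x 0, v 0) - (y 0, w 0))‖ * exp (ω * t) := by
  set S := momentumScale E ω
  have hderiv : ∀ s, HasDerivAt (fun s ↦ S ((x s, v s) - (y s, w s)))
      (S ((v s, -g (x s)) - (w s, -g (y s)))) s := fun s ↦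
    S.hasFDerivAt.comp_hasDerivAt s (((hx s).prodMk (hv s)).sub ((hy s).prodMk (hw s)))
  have hvector_field : ∀ s, ‖S ((v s, -g (x s)) - (w s, -g (y s)))‖ ≤
      ω * ‖S ((x s, v s) - (y s, w s))‖ := by
    intro s
    have hforce : ‖g (y s) - g (x s)‖ / ω ≤ ω * ‖x s - y s‖ := by
      rw [div_le_iff₀ hω, norm_sub_rev]
      nlinarith [hlip (x s) (y s), norm_nonneg (x s - y s)]
    simp only [S, norm_momentumScale hω.le, Prod.mk_sub_mk, neg_sub_neg]
    rw [mul_max_of_nonneg _ _ hω.le, mul_div_cancel₀ _ hω.ne']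
    exact max_le (le_max_right _ _) (le_max_of_le_left hforce)
  simpa only [gronwallBound_ε0, sub_zero] using
    norm_le_gronwallBound_of_norm_deriv_right_le (ε := 0)
      (fun s _ ↦ (hderiv s).continuousAt.continuousWithinAt) (fun s _ ↦ (hderiv s).hasDerivWithinAt)
      le_rfl (fun s _ ↦ by simpa using hvector_field s) t ⟨ht, le_rfl⟩

theorem norm_momentumScale_step_error_le {g : E → E} {M ω η L : ℝ} (hω : 0 < ω)
    (hMω : M ≤ ω ^ 2) (hlip : ∀ x y, ‖g x - g y‖ ≤ M * ‖x - y‖) {Q P : E → E → ℝ → E}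
    (hQ0 : ∀ q p, Q q p 0 = q) (hP0 : ∀ q p, P q p 0 = p)
    (hQ : ∀ q p t, HasDerivAt (Q q p) (P q p t) t) (hP : ∀ q p t, HasDerivAt (P q p) (-g (Q q p t)) t)
    {Φ : E × E → E × E} (hη : 0 ≤ η)
    (hlocal : ∀ z, ‖momentumScale E ω (Φ z - (Q z.1 z.2 η, P z.1 z.2 η))‖ ≤ L)
    {y w : ℝ → E} (hy : ∀ t, HasDerivAt y (w t) t) (hw : ∀ t, HasDerivAt w (-g (y t)) t)
    (z : E × E) (s : ℝ) :
    ‖momentumScale E ω (Φ z - (y (s + η), w (s + η)))‖ ≤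
      L + exp (ω * η) * ‖momentumScale E ω (z - (y s, w s))‖ := by
  have htransport := norm_momentumScale_sub_le_mul_exp hω hMω hlip (hQ z.1 z.2) (hP z.1 z.2)
    (fun t ↦ (hy (t + s)).comp_add_const t s) (fun t ↦ (hw (t + s)).comp_add_const t s) hη
  simp only [hQ0, hP0, zero_add, add_comm η s] at htransport
  calc ‖momentumScale E ω (Φ z - (y (s + η), w (s + η)))‖
      = ‖momentumScale E ω (Φ z - (Q z.1 z.2 η, P z.1 z.2 η)) +
          momentumScale E ω ((Q z.1 z.2 η, P z.1 z.2 η) - (y (s + η), w (s + η)))‖ := by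
        rw [← map_add, sub_add_sub_cancel]
    _ ≤ L + ‖momentumScale E ω (z - (y s, w s))‖ * exp (ω * η) :=
        (norm_add_le _ _).trans (add_le_add (hlocal z) htransport)
    _ = L + exp (ω * η) * ‖momentumScale E ω (z - (y s, w s))‖ := by rw [mul_comm]

theorem norm_momentumScale_iterate_error_le {g : E → E} {M ω η L : ℝ} (hω : 0 < ω)
    (hMω : M ≤ ω ^ 2) (hlip : ∀ x y, ‖g x - g y‖ ≤ M * ‖x - y‖) {Q P : E → E → ℝ → E}
    (hQ0 : ∀ q p, Q q p 0 = q) (hP0 : ∀ q p, P q p 0 = p)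
    (hQ : ∀ q p t, HasDerivAt (Q q p) (P q p t) t) (hP : ∀ q p t, HasDerivAt (P q p) (-g (Q q p t)) t)
    {Φ : E × E → E × E} (hη : 0 ≤ η)
    (hlocal : ∀ z, ‖momentumScale E ω (Φ z - (Q z.1 z.2 η, P z.1 z.2 η))‖ ≤ L) (n : ℕ) (q p : E) :
    ‖momentumScale E ω (Φ^[n] (q, p) - (Q q p (n * η), P q p (n * η)))‖ ≤
      n * L * exp (ω * η) ^ n := by
  refine le_mul_mul_pow_of_le_add_mul
    (e := fun k ↦ ‖momentumScale E ω (Φ^[k] (q, p) - (Q q p (k * η), P q p (k * η)))‖)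
    ((norm_nonneg _).trans (hlocal (q, p))) (one_le_exp (by positivity)) (by simp [hQ0, hP0])
    (fun k ↦ ?_) n
  rw [Function.iterate_succ_apply', Nat.cast_succ, add_one_mul]
  exact norm_momentumScale_step_error_le hω hMω hlip hQ0 hP0 hQ hP hη hlocal (hQ q p) (hP q p) _ _

end PhaseSpace

theorem integrator_global_error_general {d : ℕ}
    (gU : EuclideanSpace ℝ (Fin d) → EuclideanSpace ℝ (Fin d))
    (m M : ℝ) (hm : 0 < m) (hmM : m ≤ M)
    (hlip : ∀ x y, ‖gU x - gU y‖ ≤ M * ‖x - y‖)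
    -- exact Hamiltonian flow from initial position `q` and momentum `p`
    (Q P : EuclideanSpace ℝ (Fin d) → EuclideanSpace ℝ (Fin d) → ℝ → EuclideanSpace ℝ (Fin d))
    (hQ0 : ∀ q p, Q q p 0 = q) (hP0 : ∀ q p, P q p 0 = p)
    (hQ : ∀ q p t, HasDerivAt (Q q p) (P q p t) t)
    (hP : ∀ q p t, HasDerivAt (P q p) (-gU (Q q p t)) t)
    -- one step of the numerical integrator, with local error bounds
    (Φ : EuclideanSpace ℝ (Fin d) × EuclideanSpace ℝ (Fin d) →
          EuclideanSpace ℝ (Fin d) × EuclideanSpace ℝ (Fin d))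
    (η T ε₁ ε₂ : ℝ) (hη : 0 < η)
    (hloc1 : ∀ z, ‖(Φ z).1 - Q z.1 z.2 η‖ ≤ η^3 * ε₁)
    (hloc2 : ∀ z, ‖(Φ z).2 - P z.1 z.2 η‖ ≤ η^3 * ε₂)
    (hT2 : T ≤ (1/6) * Real.sqrt m / M)
    (n : ℕ) (hn : T = n * η)
    (q p : EuclideanSpace ℝ (Fin d)) :
    ‖(Φ^[n] (q, p)).1 - Q q p T‖ ≤ T * η^2 * (ε₁ + ε₂ / Real.sqrt M) * Real.exp 1 ∧
    ‖(Φ^[n] (q, p)).2 - P q p T‖ ≤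
      T * η^2 * (ε₁ + ε₂ / Real.sqrt M) * Real.exp 1 * Real.sqrt M := by
  set ω := √M
  have hM : 0 < M := hm.trans_le hmM
  have hω : 0 < ω := sqrt_pos.2 hM
  set L := η ^ 3 * (ε₁ + ε₂ / ω)
  have hlocal : ∀ z, ‖momentumScale _ ω (Φ z - (Q z.1 z.2 η, P z.1 z.2 η))‖ ≤ L := fun z ↦
    (norm_momentumScale_le_add hω (hloc1 z) (hloc2 z)).trans_eq (by ring)
  have hglobal := norm_momentumScale_iterate_error_le hω (sq_sqrt hM.le).ge hlip hQ0 hP0 hQ hP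
    hη.le hlocal n q p
  have hωT : ω * T ≤ 1 :=
    calc ω * T ≤ ω * (1 / 6 * √m / M) := by gcongr
      _ ≤ ω * (1 / 6 * ω / ω ^ 2) := by rw [sq_sqrt hM.le]; gcongr; exact sqrt_le_sqrt hmM
      _ ≤ 1 := by field_simp; norm_num
  have hbound : ‖momentumScale _ ω (Φ^[n] (q, p) - (Q q p T, P q p T))‖ ≤
      T * η ^ 2 * (ε₁ + ε₂ / ω) * exp 1 := by
    calc _ ≤ n * L * exp (ω * η) ^ n := hn ▸ hglobal
      _ = n * L * exp (ω * T) := by rw [← exp_nat_mul, hn]; ring_nf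
      _ ≤ n * L * exp 1 := by
        have hL : 0 ≤ L := (norm_nonneg _).trans (hlocal (q, p))
        gcongr
      _ = T * η ^ 2 * (ε₁ + ε₂ / ω) * exp 1 := by rw [hn]; ring
  rw [norm_momentumScale hω.le, max_le_iff, div_le_iff₀ hω] at hbound
  exact hbound

/-- global error bound for the composition of `T/η` steps of a
one-step integrator with third-order local error, for the Hamiltonian flow of an
`m`-strongly convex potential with `M`-Lipschitz gradient. -/
theorem integrator_global_error {d : ℕ}
    (U : EuclideanSpace ℝ (Fin d) → ℝ)
    (gU : EuclideanSpace ℝ (Fin d) → EuclideanSpace ℝ (Fin d))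
    (hU : ∀ x, HasGradientAt U (gU x) x)
    (m M : ℝ) (hm : 0 < m) (hmM : m ≤ M)
    (hconv : ∀ x y, m * ‖x - y‖^2 ≤ ⟪gU x - gU y, x - y⟫_ℝ)
    (hlip : ∀ x y, ‖gU x - gU y‖ ≤ M * ‖x - y‖)
    -- exact Hamiltonian flow from initial position `q` and momentum `p`
    (Q P : EuclideanSpace ℝ (Fin d) → EuclideanSpace ℝ (Fin d) → ℝ → EuclideanSpace ℝ (Fin d))
    (hQ0 : ∀ q p, Q q p 0 = q) (hP0 : ∀ q p, P q p 0 = p)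
    (hQ : ∀ q p t, HasDerivAt (Q q p) (P q p t) t)
    (hP : ∀ q p t, HasDerivAt (P q p) (-gU (Q q p t)) t)
    -- one step of the numerical integrator, with local error bounds
    (Φ : EuclideanSpace ℝ (Fin d) × EuclideanSpace ℝ (Fin d) →
          EuclideanSpace ℝ (Fin d) × EuclideanSpace ℝ (Fin d))
    (η T ε₁ ε₂ : ℝ) (hη : 0 < η) (hε₁ : 0 ≤ ε₁) (hε₂ : 0 ≤ ε₂)
    (hloc1 : ∀ z, ‖(Φ z).1 - Q z.1 z.2 η‖ ≤ η^3 * ε₁)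
    (hloc2 : ∀ z, ‖(Φ z).2 - P z.1 z.2 η‖ ≤ η^3 * ε₂)
    (hT1 : η ≤ T) (hT2 : T ≤ (1/6) * Real.sqrt m / M)
    (n : ℕ) (hn : T = n * η)
    (q p : EuclideanSpace ℝ (Fin d)) :
    ‖(Φ^[n] (q, p)).1 - Q q p T‖ ≤ T * η^2 * (ε₁ + ε₂ / Real.sqrt M) * Real.exp 1 ∧
    ‖(Φ^[n] (q, p)).2 - P q p T‖ ≤
      T * η^2 * (ε₁ + ε₂ / Real.sqrt M) * Real.exp 1 * Real.sqrt M :=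
  integrator_global_error_general gU m M hm hmM hlip Q P hQ0 hP0 hQ hP Φ η T ε₁ ε₂ hη hloc1 hloc2
    hT2 n hn q p
end
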